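/- arXiv:2507.07065 — 4 statements merged into one kernel-verified Lean document; each statement's English description precedes it below -/
import Mathlib

section
/- Let A be Hermitian and B positive definite on a finite-dimensional Hilbert space. At any γ₀ such that A - γ₀B is nonsingular, the map γ ↦ Tr[(A - γB)₊] is differentiable at γ₀ with derivative -Tr[B {A > γ₀ B}], where {A > γB} denotes the spectral projection of A - γB onto its strictly positive part. -/
open MeasureTheory Matrix
open scoped ComplexOrder
noncomputable section

/-- The positive part `(X)₊` of a Hermitian matrix, via continuous functional calculus. -/
def mposPart {n : ℕ} (X : Matrix (Fin n) (Fin n) ℂ) : Matrix (Fin n) (Fin n) ℂ :=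
  cfc (fun x : ℝ => max x 0) X

/-- The spectral projection of a Hermitian matrix onto its strictly positive part,
so that `projPos (A - γ • B)` is the projection `{A > γB}`. -/
def projPos {n : ℕ} (X : Matrix (Fin n) (Fin n) ℂ) : Matrix (Fin n) (Fin n) ℂ :=
  cfc (fun x : ℝ => if 0 < x then (1:ℝ) else 0) X

/-- The spectral projection of a Hermitian matrix onto its nonnegative part,
so that `projNonneg (γ • B - A)` is the projection `{A ≤ γB}`. -/
def projNonneg {n : ℕ} (X : Matrix (Fin n) (Fin n) ℂ) : Matrix (Fin n) (Fin n) ℂ :=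
  cfc (fun x : ℝ => if 0 ≤ x then (1:ℝ) else 0) X

/-- Matrix logarithm via functional calculus. -/
def mlog {n : ℕ} (X : Matrix (Fin n) (Fin n) ℂ) : Matrix (Fin n) (Fin n) ℂ :=
  cfc Real.log X

/-- Real matrix power via functional calculus (`Real.rpow`, so negative powers of
positive semidefinite matrices are taken on the support). -/
def mpow {n : ℕ} (X : Matrix (Fin n) (Fin n) ℂ) (a : ℝ) : Matrix (Fin n) (Fin n) ℂ :=
  cfc (fun x : ℝ => x ^ a) X

/-! The map `X ↦ Tr X₊` is convex on Hermitian matrices with subgradient `{X > 0}`: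
since `Y ≤ Y₊` and `0 ≤ {X > 0} ≤ 1`, we get
`Tr Y₊ ≥ Tr (Y {X > 0}) = Tr X₊ + Tr ((Y - X) {X > 0})`.
Along the line `γ ↦ A - γB` this makes `γ ↦ Tr (A - γB)₊` a convex function with subgradient
`-Tr (B {A > γB})`. A convex function whose subgradient is continuous at a point is differentiable
there, and `{X > 0}` depends continuously on `X` wherever `0` is not an eigenvalue of `X`. -/

open Topology Asymptotics
open scoped MatrixOrder

theorem Matrix.PosSemidef.trace_mul_nonneg {n 𝕜 : Type*} [Fintype n] [DecidableEq n] [RCLike 𝕜]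
    {M N : Matrix n n 𝕜} (hM : M.PosSemidef) (hN : N.PosSemidef) : 0 ≤ (M * N).trace := by
  set S := CFC.sqrt M
  have hS : Sᴴ = S := (CFC.sqrt_nonneg M).posSemidef.1
  have h := (hN.mul_mul_conjTranspose_same S).trace_nonneg
  rwa [hS, trace_mul_comm, ← Matrix.mul_assoc, CFC.sqrt_mul_sqrt_self M hM.nonneg] at h

namespace Matrix

section Order

variable {n 𝕜 : Type*} [Fintype n] [DecidableEq n] [RCLike 𝕜] {M M' N N' : Matrix n n 𝕜}

theorem trace_mul_mono_left (h : M ≤ M') (hN : 0 ≤ N) : (M * N).trace ≤ (M' * N).trace := by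
  rw [← sub_nonneg, ← trace_sub, ← sub_mul]
  exact (le_iff.mp h).trace_mul_nonneg hN.posSemidef

theorem trace_mul_mono_right (hM : 0 ≤ M) (h : N ≤ N') : (M * N).trace ≤ (M * N').trace := by
  rw [← sub_nonneg, ← trace_sub, ← mul_sub]
  exact hM.posSemidef.trace_mul_nonneg (le_iff.mp h)

end Order

variable {n : ℕ} {X Y : Matrix (Fin n) (Fin n) ℂ}

theorem mposPart_eq_mul_projPos (hX : X.IsHermitian) : mposPart X = X * projPos X := by
  have hfin : (spectrum ℝ X).Finite := finite_real_spectrum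
  conv_rhs => enter [1]; rw [← cfc_id' ℝ X hX.isSelfAdjoint]
  rw [mposPart, projPos, ← cfc_mul _ _ X (hfin.continuousOn _) (hfin.continuousOn _)]
  refine cfc_congr fun x _ => ?_
  split_ifs with h
  · simp [h.le]
  · simp [not_lt.mp h]

theorem le_mposPart (hX : X.IsHermitian) : X ≤ mposPart X := by
  conv_lhs => rw [← cfc_id' ℝ X hX.isSelfAdjoint]
  exact cfc_mono (fun x _ => le_max_left x 0) (finite_real_spectrum.continuousOn _)
    (finite_real_spectrum.continuousOn _)

theorem mposPart_nonneg : 0 ≤ mposPart X :=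
  cfc_nonneg fun x _ => le_max_right x 0

theorem projPos_nonneg : 0 ≤ projPos X :=
  cfc_nonneg fun x _ => by split_ifs <;> norm_num

theorem projPos_le_one : projPos X ≤ 1 :=
  cfc_le_one _ X fun x _ => by split_ifs <;> norm_num

theorem trace_mul_le_trace_mposPart (hX : X.IsHermitian) {D : Matrix (Fin n) (Fin n) ℂ}
    (hD₀ : 0 ≤ D) (hD₁ : D ≤ 1) : (X * D).trace ≤ (mposPart X).trace :=
  calc (X * D).trace ≤ (mposPart X * D).trace := trace_mul_mono_left (le_mposPart hX) hD₀
    _ ≤ (mposPart X * 1).trace := trace_mul_mono_right mposPart_nonneg hD₁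
    _ = (mposPart X).trace := by rw [mul_one]

theorem trace_mposPart_add_le (hX : X.IsHermitian) (hY : Y.IsHermitian) :
    (mposPart X).trace + ((Y - X) * projPos X).trace ≤ (mposPart Y).trace := by
  rw [mposPart_eq_mul_projPos hX, ← trace_add, ← add_mul, add_sub_cancel]
  exact trace_mul_le_trace_mposPart hY projPos_nonneg projPos_le_one

open scoped Matrix.Norms.L2Operator in
theorem continuousOn_projPos :
    ContinuousOn (projPos (n := n)) {X | X.IsHermitian ∧ IsUnit X} := by
  refine ContinuousOn.cfc_of_mem_nhdsSet (s := {0}ᶜ) _ (a := id) ?_ continuousOn_id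
    (fun X hX => hX.1.isSelfAdjoint) ?_
  · refine isOpen_compl_singleton.mem_nhdsSet.mpr (Set.iUnion₂_subset fun X hX => ?_)
    simpa using spectrum.zero_notMem ℝ hX.2
  · intro x hx
    refine ContinuousAt.continuousWithinAt ?_
    rcases lt_or_gt_of_ne hx with h | h
    · refine (continuousAt_const (y := (0 : ℝ))).congr ?_
      filter_upwards [gt_mem_nhds h] with y hy
      simp [hy.not_gt]
    · refine (continuousAt_const (y := (1 : ℝ))).congr ?_
      filter_upwards [lt_mem_nhds h] with y hy
      simp [hy]

open scoped Matrix.Norms.L2Operator in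
theorem continuousWithinAt_projPos (hX : X.IsHermitian) (hX₀ : IsUnit X) :
    ContinuousWithinAt projPos {X | X.IsHermitian} X :=
  (continuousWithinAt_inter (Units.isOpen.mem_nhds hX₀)).mp (continuousOn_projPos _ ⟨hX, hX₀⟩)

end Matrix

theorem ContinuousAt.projPos {α : Type*} [TopologicalSpace α] {n : ℕ}
    {f : α → Matrix (Fin n) (Fin n) ℂ} {a : α} (hf : ContinuousAt f a)
    (hf_herm : ∀ x, (f x).IsHermitian) (hfa : IsUnit (f a)) :
    ContinuousAt (fun x => projPos (f x)) a :=
  (Matrix.continuousWithinAt_projPos (hf_herm a) hfa).tendsto.comp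
    (tendsto_nhdsWithin_iff.mpr ⟨hf, Filter.Eventually.of_forall hf_herm⟩)

theorem hasDerivAt_of_forall_add_mul_le {f g : ℝ → ℝ} {x₀ : ℝ}
    (hsub : ∀ x y, f x + (y - x) * g x ≤ f y) (hg : ContinuousAt g x₀) :
    HasDerivAt f (g x₀) x₀ := by
  rw [hasDerivAt_iff_isLittleO]
  have hsmall : (fun y => (g y - g x₀) * (y - x₀)) =o[𝓝 x₀] fun y => y - x₀ := by
    simpa using (isLittleO_one_iff ℝ).mpr (tendsto_sub_nhds_zero_iff.mpr hg.tendsto)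
      |>.mul_isBigO (isBigO_refl (fun y => y - x₀) _)
  refine (IsBigO.of_bound 1 (Filter.Eventually.of_forall fun y => ?_)).trans_isLittleO hsmall
  -- the subgradient inequalities at `x₀` and at `y` squeeze the remainder between `0` and
  -- `(g y - g x₀) * (y - x₀)`
  have hlow := hsub x₀ y
  have hup := hsub y x₀
  rw [one_mul, Real.norm_eq_abs, Real.norm_eq_abs, smul_eq_mul, abs_of_nonneg (by linarith)]
  exact le_trans (by linarith) (le_abs_self _)

/-- at any `γ₀` where `A - γ₀ B` is nonsingular, `γ ↦ Tr[(A - γB)₊]`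
is differentiable with derivative `-Tr[B {A > γ₀ B}]`. -/
theorem hasDerivAt_trace_posPart {n : ℕ} (A B : Matrix (Fin n) (Fin n) ℂ)
    (hA : A.IsHermitian) (hB : B.PosDef) (γ₀ : ℝ) (hns : IsUnit (A - γ₀ • B)) :
    HasDerivAt (fun γ : ℝ => (Matrix.trace (mposPart (A - γ • B))).re)
      (-(Matrix.trace (B * projPos (A - γ₀ • B))).re) γ₀ := by
  have hX (γ : ℝ) : (A - γ • B).IsHermitian := hA.sub (hB.1.smul (IsSelfAdjoint.all γ))
  refine hasDerivAt_of_forall_add_mul_le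
    (g := fun γ => -(trace (B * projPos (A - γ • B))).re) (fun γ γ' => ?_) ?_
  · have h := Complex.re_le_re (trace_mposPart_add_le (hX γ) (hX γ'))
    rw [sub_sub_sub_cancel_left, ← sub_smul, smul_mul, trace_smul, Complex.add_re,
      Complex.real_smul, Complex.re_ofReal_mul] at h
    linarith
  · have hP : ContinuousAt (fun γ : ℝ => projPos (A - γ • B)) γ₀ :=
      (by fun_prop : ContinuousAt (fun γ : ℝ => A - γ • B) γ₀).projPos hX hns
    fun_prop
end
end

section
/- Let A, B be Hermitian matrices, t₀ ∈ ℝ, and f a function continuously differentiable on a neighborhood of the spectrum of A + t₀B. Then the map t ↦ Tr[f(A + tB)] is differentiable at t₀ with derivative Tr[B · f'(A + t₀B)]. -/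
open MeasureTheory Matrix
open scoped ComplexOrder
noncomputable section

/-!
For a polynomial `p`, cyclicity of the trace gives `d/dt Tr p(A + tB) = Tr[B p'(A + tB)]`. For a
globally `C¹` function `F`, approximate `F'` uniformly by polynomials on an interval containing the
spectra of `A + tB` for `t` near `t₀` and integrate: this gives polynomials `p_k` with `p_k → F` and
`p_k' → F'` uniformly there. Since `‖Tr[C g(X)]‖ ≤ n (∑ ‖C_jk‖) sup_{σ(X)} |g|` for every Hermitian
`X`, the traces converge uniformly in `t`, and the uniform limit of the derivatives is the
derivative of the limit. A general `f`, `C¹` only near `σ(A + t₀B)`, agrees there with a globally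
`C¹` cutoff `χ f`, and by upper semicontinuity of the spectrum, `σ(A + tB)` stays in that region for
`t` near `t₀`.
-/

open Filter Topology Set Polynomial
open scoped Manifold

theorem spectrum.upperHemicontinuous {𝕜 A : Type*} [NontriviallyNormedField 𝕜] [ProperSpace 𝕜]
    [NormedRing A] [NormedAlgebra 𝕜 A] [CompleteSpace A] :
    UpperHemicontinuous (spectrum 𝕜 : A → Set 𝕜) := by
  refine .of_forall_isOpen fun a V hV haV => ?_
  set r := (‖a‖ + 1) * ‖(1 : A)‖
  have hK : IsCompact (Metric.closedBall (0 : 𝕜) r \ V) := (isCompact_closedBall _ _).diff hV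
  have hunit : ∀ z ∈ Metric.closedBall (0 : 𝕜) r \ V,
      ∀ᶠ p : A × 𝕜 in 𝓝 (a, z), IsUnit (algebraMap 𝕜 A p.2 - p.1) := fun z hz =>
    (Units.isOpen.preimage (by fun_prop)).mem_nhds (not_not.mp fun h => hz.2 (haV h))
  filter_upwards [hK.eventually_forall_of_forall_eventually
      (P := fun b z => IsUnit (algebraMap 𝕜 A z - b)) hunit,
    continuous_norm.continuousAt.eventually_lt continuousAt_const (lt_add_one ‖a‖)]
    with b hb hnorm z hz
  by_contra hzV
  refine hz (hb z ⟨?_, hzV⟩)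
  rw [mem_closedBall_zero_iff]
  exact (spectrum.norm_le_norm_mul_of_mem hz).trans
    (mul_le_mul_of_nonneg_right hnorm.le (norm_nonneg _))

theorem tendstoUniformlyOn_of_dist_le {ι β α : Type*} [PseudoMetricSpace α] {F : ι → β → α}
    {f : β → α} {l : Filter ι} {s : Set β} {u : ι → ℝ} (hu : Tendsto u l (𝓝 0))
    (h : ∀ᶠ i in l, ∀ x ∈ s, dist (f x) (F i x) ≤ u i) : TendstoUniformlyOn F f l s := by
  rw [Metric.tendstoUniformlyOn_iff]
  intro ε hε
  filter_upwards [h, hu.eventually (gt_mem_nhds hε)] with i hi hui x hx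
  exact (hi x hx).trans_lt hui

theorem Polynomial.exists_derivative_eq {K : Type*} [Field K] [CharZero K] (q : K[X]) :
    ∃ p : K[X], derivative p = q := by
  induction q using Polynomial.induction_on' with
  | add q r hq hr =>
    obtain ⟨p, rfl⟩ := hq
    obtain ⟨p', rfl⟩ := hr
    exact ⟨p + p', derivative_add⟩
  | monomial k c =>
    refine ⟨monomial (k + 1) (c / (k + 1)), ?_⟩
    rw [derivative_monomial, Nat.add_sub_cancel, Nat.cast_add_one,
      div_mul_cancel₀ _ (Nat.cast_add_one_ne_zero k)]

theorem exists_polynomial_tendstoUniformlyOn_of_contDiff {F : ℝ → ℝ} (hF : ContDiff ℝ 1 F)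
    (a b : ℝ) : ∃ p : ℕ → ℝ[X],
      TendstoUniformlyOn (fun k x => (p k).eval x) F atTop (Icc a b) ∧
      TendstoUniformlyOn (fun k x => (derivative (p k)).eval x) (deriv F) atTop (Icc a b) := by
  choose q hq using fun k : ℕ => exists_polynomial_near_of_continuousOn a b (deriv F)
    (hF.continuous_deriv le_rfl).continuousOn (1 / (k + 1)) (by positivity)
  choose P hP using fun k => (q k).exists_derivative_eq
  set p : ℕ → ℝ[X] := fun k => P k + C (F a - (P k).eval a)
  have hp' (k : ℕ) : derivative (p k) = q k := by simp [p, hP]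
  have hderiv (k : ℕ) : ∀ x ∈ Icc a b, ‖deriv F x - (derivative (p k)).eval x‖ ≤ 1 / (k + 1) :=
    fun x hx => by rw [hp', Real.norm_eq_abs, abs_sub_comm]; exact (hq k x hx).le
  refine ⟨p, tendstoUniformlyOn_of_dist_le (u := fun k : ℕ => 1 / (k + 1) * (b - a)) ?_
    (.of_forall fun k x hx => ?_), tendstoUniformlyOn_of_dist_le
    tendsto_one_div_add_atTop_nhds_zero_nat (.of_forall hderiv)⟩
  · simpa using tendsto_one_div_add_atTop_nhds_zero_nat.mul_const (b - a)
  have hmvt := (convex_Icc a b).norm_image_sub_le_of_norm_hasDerivWithin_le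
    (fun y _ =>
      ((hF.differentiable one_ne_zero y).hasDerivAt.sub ((p k).hasDerivAt y)).hasDerivWithinAt)
    (hderiv k) (left_mem_Icc.2 (hx.1.trans hx.2)) hx
  have hpa : (p k).eval a = F a := by simp [p]
  rw [Pi.sub_apply, Pi.sub_apply, hpa, sub_self, sub_zero, Real.norm_eq_abs, Real.norm_eq_abs,
    abs_of_nonneg (sub_nonneg.2 hx.1)] at hmvt
  rw [Real.dist_eq]
  exact hmvt.trans (mul_le_mul_of_nonneg_left (by linarith [hx.2]) (by positivity))

theorem ContDiffOn.contDiff_smul_of_tsupport_subset {𝕜 E F : Type*} [NontriviallyNormedField 𝕜]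
    [NormedAddCommGroup E] [NormedSpace 𝕜 E] [NormedAddCommGroup F] [NormedSpace 𝕜 F]
    {n : WithTop ℕ∞} {χ : E → 𝕜} {f : E → F} {U : Set E} (hU : IsOpen U)
    (hf : ContDiffOn 𝕜 n f U) (hχ : ContDiff 𝕜 n χ) (hχU : tsupport χ ⊆ U) :
    ContDiff 𝕜 n fun x => χ x • f x := by
  refine contDiff_iff_contDiffAt.2 fun x => ?_
  by_cases hx : x ∈ U
  · exact hχ.contDiffAt.smul (hf.contDiffAt (hU.mem_nhds hx))
  · refine contDiffAt_const (c := (0 : F)).congr_of_eventuallyEq ?_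
    filter_upwards [notMem_tsupport_iff_eventuallyEq.1 fun h => hx (hχU h)] with y hy
    simp [hy]

theorem ContDiffOn.exists_contDiff_eventuallyEq_nhdsSet {E F : Type*} [NormedAddCommGroup E]
    [NormedSpace ℝ E] [FiniteDimensional ℝ E] [NormedAddCommGroup F] [NormedSpace ℝ F] {n : ℕ∞}
    {f : E → F} {U S : Set E} (hU : IsOpen U) (hf : ContDiffOn ℝ n f U) (hS : IsCompact S)
    (hSU : S ⊆ U) : ∃ g : E → F, ContDiff ℝ n g ∧ g =ᶠ[𝓝ˢ S] f := by
  obtain ⟨L, hL, hSL, hLU⟩ := exists_compact_between hS hU hSU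
  obtain ⟨χ, hχ1, hχ0, -⟩ :=
    exists_contMDiffMap_one_nhds_of_subset_interior 𝓘(ℝ, E) (n := n) hS.isClosed hSL
  have hχU : tsupport χ ⊆ U :=
    (closure_minimal (Function.support_subset_iff'.2 hχ0) hL.isClosed).trans hLU
  refine ⟨fun x => χ x • f x,
    hf.contDiff_smul_of_tsupport_subset hU (contMDiff_iff_contDiff.1 χ.contMDiff) hχU, ?_⟩
  filter_upwards [hχ1] with x hx
  simp [hx]

namespace Matrix

variable {n 𝕜 : Type*} [Fintype n] [DecidableEq n] [RCLike 𝕜]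

theorem upperHemicontinuous_spectrum :
    UpperHemicontinuous (spectrum ℝ : Matrix n n 𝕜 → Set ℝ) := by
  -- any algebra norm inducing the entrywise topology will do; the spectrum does not see it
  let := Matrix.linftyOpNormedRing (n := n) (α := 𝕜)
  let := Matrix.linftyOpNormedAlgebra (R := ℝ) (n := n) (α := 𝕜)
  exact spectrum.upperHemicontinuous

theorem eventually_spectrum_add_smul_subset (A B : Matrix n n 𝕜) {t₀ : ℝ} {V : Set ℝ}
    (hV : IsOpen V) (h : spectrum ℝ (A + t₀ • B) ⊆ V) :
    ∀ᶠ t in 𝓝 t₀, spectrum ℝ (A + t • B) ⊆ V :=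
  ((continuous_const.add (continuous_id.smul continuous_const)).tendsto t₀).eventually
    (upperHemicontinuous_spectrum.forall_isOpen _ V hV h)

theorem IsHermitian.trace_mul_cfc {X : Matrix n n 𝕜} (hX : X.IsHermitian) (C : Matrix n n 𝕜)
    (g : ℝ → ℝ) :
    trace (C * cfc g X) = ∑ i, (star (hX.eigenvectorUnitary : Matrix n n 𝕜) * C *
      hX.eigenvectorUnitary) i i * g (hX.eigenvalues i) := by
  rw [hX.cfc_eq, IsHermitian.cfc, Unitary.conjStarAlgAut_apply, ← Matrix.mul_assoc,
    trace_mul_comm, ← Matrix.mul_assoc, ← Matrix.mul_assoc]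
  simp only [trace, diag_apply, mul_diagonal, Function.comp_apply]

theorem norm_diag_star_mul_mul_le {U : Matrix n n 𝕜} (hU : U ∈ unitaryGroup n 𝕜)
    (C : Matrix n n 𝕜) (i : n) : ‖(star U * C * U) i i‖ ≤ ∑ j, ∑ k, ‖C j k‖ := by
  simp only [mul_apply, star_apply, Finset.sum_mul]
  rw [Finset.sum_comm]
  refine (norm_sum_le _ _).trans (Finset.sum_le_sum fun j _ => (norm_sum_le _ _).trans
    (Finset.sum_le_sum fun k _ => ?_))
  rw [norm_mul, norm_mul, norm_star]
  calc ‖U j i‖ * ‖C j k‖ * ‖U k i‖ ≤ 1 * ‖C j k‖ * 1 := by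
        gcongr
        · exact entry_norm_bound_of_unitary hU j i
        · exact entry_norm_bound_of_unitary hU k i
    _ = ‖C j k‖ := by ring

theorem IsHermitian.norm_trace_mul_cfc_sub_le {X : Matrix n n 𝕜} (hX : X.IsHermitian)
    (C : Matrix n n 𝕜) {g h : ℝ → ℝ} {ε : ℝ} (hgh : ∀ x ∈ spectrum ℝ X, |g x - h x| ≤ ε) :
    ‖trace (C * cfc g X) - trace (C * cfc h X)‖ ≤ Fintype.card n * (∑ j, ∑ k, ‖C j k‖) * ε := by
  rw [hX.trace_mul_cfc, hX.trace_mul_cfc, ← Finset.sum_sub_distrib]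
  refine (norm_sum_le_of_le _ (n := fun _ => (∑ j, ∑ k, ‖C j k‖) * ε) fun i _ => ?_).trans_eq
    (by simp [mul_assoc])
  rw [← mul_sub, norm_mul, ← RCLike.ofReal_sub, RCLike.norm_ofReal]
  exact mul_le_mul (norm_diag_star_mul_mul_le hX.eigenvectorUnitary.2 C i)
    (hgh _ (hX.eigenvalues_mem_spectrum_real i)) (abs_nonneg _)
    (by positivity)

theorem tendstoUniformlyOn_trace_mul_cfc {ι T : Type*} {l : Filter ι} {g : ι → ℝ → ℝ}
    {g₀ : ℝ → ℝ} {K : Set ℝ} (hg : TendstoUniformlyOn g g₀ l K) (C : Matrix n n 𝕜)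
    {X : T → Matrix n n 𝕜} {s : Set T} (hX : ∀ t ∈ s, (X t).IsHermitian)
    (hXK : ∀ t ∈ s, spectrum ℝ (X t) ⊆ K) :
    TendstoUniformlyOn (fun i t => trace (C * cfc (g i) (X t)))
      (fun t => trace (C * cfc g₀ (X t))) l s := by
  rw [Metric.tendstoUniformlyOn_iff] at hg ⊢
  intro ε hε
  set c : ℝ := Fintype.card n * ∑ j, ∑ k, ‖C j k‖
  have hc : 0 ≤ c := by positivity
  filter_upwards [hg (ε / (c + 1)) (by positivity)] with i hi t ht
  rw [dist_eq_norm]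
  calc _ ≤ c * (ε / (c + 1)) := (hX t ht).norm_trace_mul_cfc_sub_le C fun x hx => by
        rw [← Real.dist_eq]; exact (hi x (hXK t ht hx)).le
    _ < ε := by rw [mul_div_assoc', div_lt_iff₀ (by positivity)]; nlinarith

theorem trace_sum_pow_mul_mul_pow (X B : Matrix n n 𝕜) (k : ℕ) :
    trace (∑ i ∈ Finset.range k, X ^ (k.pred - i) * B * X ^ i) =
      k * trace (B * X ^ (k - 1)) := by
  rw [trace_sum, Finset.sum_congr rfl fun i hi => ?_, Finset.sum_const, Finset.card_range,
    nsmul_eq_mul]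
  rw [trace_mul_cycle, ← pow_add, trace_mul_comm, Nat.pred_eq_sub_one,
    Nat.add_sub_cancel' (Nat.le_sub_one_of_lt (Finset.mem_range.mp hi))]

theorem hasDerivAt_trace_aeval (A B : Matrix n n 𝕜) (p : ℝ[X]) (t : ℝ) :
    HasDerivAt (fun s : ℝ => trace (aeval (A + s • B) p))
      (trace (B * aeval (A + t • B) (derivative p))) t := by
  let := Matrix.linftyOpNormedRing (n := n) (α := 𝕜)
  let := Matrix.linftyOpNormedAlgebra (R := ℝ) (n := n) (α := 𝕜)
  have hline : HasDerivAt (fun s : ℝ => A + s • B) B t :=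
    (((hasDerivAt_id t).smul_const B).const_add A).congr_deriv (one_smul ℝ B)
  have htrace {M : ℝ → Matrix n n 𝕜} {M' : Matrix n n 𝕜} (h : HasDerivAt M M' t) :
      HasDerivAt (fun s => trace (M s)) (trace M') t :=
    ((traceLinearMap n 𝕜 𝕜).restrictScalars ℝ).toContinuousLinearMap.hasFDerivAt.comp_hasDerivAt
      t h
  induction p using Polynomial.induction_on' with
  | add p q hp hq => simpa [Matrix.mul_add] using hp.fun_add hq
  | monomial k c =>
    convert htrace ((hline.pow' k).const_smul c) using 1
    · ext s
      simp [aeval_monomial, Algebra.smul_def]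
    · rw [trace_smul, trace_sum_pow_mul_mul_pow, derivative_monomial, aeval_monomial,
        ← Algebra.smul_def, mul_smul_comm, trace_smul, mul_smul, Nat.cast_smul_eq_nsmul,
        nsmul_eq_mul]

theorem hasDerivAt_trace_cfc_of_contDiff {A B : Matrix n n 𝕜} (hA : A.IsHermitian)
    (hB : B.IsHermitian) {F : ℝ → ℝ} (hF : ContDiff ℝ 1 F) (t₀ : ℝ) :
    HasDerivAt (fun t : ℝ => trace (cfc F (A + t • B)))
      (trace (B * cfc (deriv F) (A + t₀ • B))) t₀ := by
  have hX (t : ℝ) : (A + t • B).IsHermitian := hA.add (hB.smul (.all t))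
  obtain ⟨r, hr⟩ := (finite_real_spectrum (A := A + t₀ • B)).isBounded.subset_ball (0 : ℝ)
  obtain ⟨s, hsr, hs, ht₀⟩ :=
    eventually_nhds_iff.1 (eventually_spectrum_add_smul_subset A B Metric.isOpen_ball hr)
  have hsK (t : ℝ) (ht : t ∈ s) : spectrum ℝ (A + t • B) ⊆ Icc (-r) r :=
    (hsr t ht).trans (by rw [Real.ball_eq_Ioo, zero_sub, zero_add]; exact Ioo_subset_Icc_self)
  have haeval (q : ℝ[X]) (t : ℝ) : aeval (A + t • B) q = cfc q.eval (A + t • B) :=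
    (cfc_polynomial q _ (hX t).isSelfAdjoint).symm
  obtain ⟨p, hp, hp'⟩ := exists_polynomial_tendstoUniformlyOn_of_contDiff hF (-r) r
  refine hasDerivAt_of_tendstoUniformlyOn (l := atTop) hs
    (f := fun k t => trace (aeval (A + t • B) (p k)))
    (f' := fun k t => trace (B * aeval (A + t • B) (derivative (p k))))
    (g' := fun t => trace (B * cfc (deriv F) (A + t • B))) ?_
    (.of_forall fun k t _ => hasDerivAt_trace_aeval A B (p k) t) (fun t ht => ?_) ht₀
  · simp_rw [haeval]
    exact tendstoUniformlyOn_trace_mul_cfc hp' B (fun t _ => hX t) hsK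
  · simpa [haeval] using
      (tendstoUniformlyOn_trace_mul_cfc hp 1 (fun t _ => hX t) hsK).tendsto_at ht

end Matrix

/-- for Hermitian `A`, `B` and `f` continuously differentiable on a
neighborhood of the spectrum of `A + t₀ B`, the map `t ↦ Tr[f(A + tB)]` is
differentiable at `t₀` with derivative `Tr[B ⬝ f'(A + t₀ B)]`. -/
theorem hasDerivAt_trace_cfc {n : ℕ} (A B : Matrix (Fin n) (Fin n) ℂ)
    (hA : A.IsHermitian) (hB : B.IsHermitian) (t₀ : ℝ) (f : ℝ → ℝ) (U : Set ℝ)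
    (hU : IsOpen U) (hspec : spectrum ℝ (A + t₀ • B) ⊆ U) (hf : ContDiffOn ℝ 1 f U) :
    HasDerivAt (fun t : ℝ => (Matrix.trace (cfc f (A + t • B))).re)
      ((Matrix.trace (B * cfc (deriv f) (A + t₀ • B))).re) t₀ := by
  obtain ⟨F, hF, hFf⟩ :=
    hf.exists_contDiff_eventuallyEq_nhdsSet (n := 1) hU finite_real_spectrum.isCompact hspec
  obtain ⟨V, hV, hσV, hVF⟩ := mem_nhdsSet_iff_exists.1 hFf
  have hderiv : cfc (deriv f) (A + t₀ • B) = cfc (deriv F) (A + t₀ • B) :=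
    cfc_congr fun x hx => (EqOn.eventuallyEq_of_mem hVF (hV.mem_nhds (hσV hx))).deriv_eq.symm
  have hnear : (fun t : ℝ => (trace (cfc f (A + t • B))).re)
      =ᶠ[𝓝 t₀] fun t => (trace (cfc F (A + t • B))).re := by
    filter_upwards [eventually_spectrum_add_smul_subset A B hV hσV] with t ht
    rw [cfc_congr fun x hx => (hVF (ht hx)).symm]
  rw [hderiv]
  exact (Complex.reCLM.hasFDerivAt.comp_hasDerivAt t₀
    (hasDerivAt_trace_cfc_of_contDiff hA hB hF t₀)).congr_of_eventuallyEq hnear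
end
end

section
/- For commuting density matrices ρ = Σ_i λ_i Π_i and σ = Σ_i μ_i Π_i (with common spectral projections Π_i, all μ_i > 0), the Riemann–Stieltjes representation ∫₀^∞ f(γ) d Tr[σ {ρ ≤ γσ}] equals the classical f-divergence Σ_i μ_i f(λ_i/μ_i), for any continuous f : [0,∞) → ℝ. -/
open MeasureTheory Matrix
open scoped ComplexOrder
noncomputable section

/-!
Commuting `ρ` and `σ` are images of the real functions `l` and `m` under the algebra
homomorphism `c ↦ ∑ i, c i • Π i` determined by the complete family of orthogonal projections
`Π i`. The functional calculus commutes with this homomorphism, so `{ρ ≤ γσ}` is the sum of the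
`Π i` with `l i ≤ γ m i`, and `γ ↦ Tr[σ{ρ ≤ γσ}]` is the distribution function of the discrete
measure with mass `m i` at `l i / m i`. Integrating `f` against that measure gives
`∑ i, m i f (l i / m i)`; positivity of `ρ` puts all the atoms in `[0, ∞)`.
-/

section Idempotents

variable {R A ι : Type*} [CommSemiring R] [Semiring A] [Algebra R A] [Fintype ι] {e : ι → A}

theorem OrthogonalIdempotents.sum_smul_mul (he : OrthogonalIdempotents e) (c : ι → R) (i : ι) :
    (∑ j, c j • e j) * e i = c i • e i := by
  rw [Finset.sum_mul, Finset.sum_eq_single i (fun j _ hji => by rw [smul_mul_assoc, he.ortho hji,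
    smul_zero]) (by simp), smul_mul_assoc, (he.idem i).eq]

theorem OrthogonalIdempotents.sum_smul_mul_sum_smul (he : OrthogonalIdempotents e)
    (c d : ι → R) : (∑ i, c i • e i) * (∑ i, d i • e i) = ∑ i, (c i * d i) • e i := by
  simp_rw [Finset.mul_sum, mul_smul_comm, he.sum_smul_mul, smul_smul, mul_comm]

namespace CompleteOrthogonalIdempotents

variable (R) in
def sumSMulAlgHom (he : CompleteOrthogonalIdempotents e) : (ι → R) →ₐ[R] A :=
  AlgHom.ofLinearMap (Fintype.linearCombination R e)
    (by simp [Fintype.linearCombination_apply, he.complete])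
    (fun c d => by
      simp only [Fintype.linearCombination_apply, he.sum_smul_mul_sum_smul, Pi.mul_apply])

theorem sumSMulAlgHom_apply (he : CompleteOrthogonalIdempotents e) (c : ι → R) :
    he.sumSMulAlgHom R c = ∑ i, c i • e i :=
  rfl

end CompleteOrthogonalIdempotents

end Idempotents

namespace CompleteOrthogonalIdempotents

variable {A ι : Type*} [Fintype ι]

theorem spectrum_sumSMulAlgHom_subset {𝕜 : Type*} [Field 𝕜] [Ring A] [Algebra 𝕜 A] {e : ι → A}
    (he : CompleteOrthogonalIdempotents e) (c : ι → 𝕜) :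
    spectrum 𝕜 (he.sumSMulAlgHom 𝕜 c) ⊆ Set.range c := by
  refine (AlgHom.spectrum_apply_subset _ c).trans ?_
  rw [Pi.spectrum_eq, Set.iUnion_subset_iff]
  intro i
  have : spectrum 𝕜 (c i) = {c i} := by simpa using spectrum.scalar_eq (A := 𝕜) (c i)
  simp [this]

theorem cfc_sumSMulAlgHom [Ring A] [StarRing A] [Algebra ℝ A] [TopologicalSpace A]
    [ContinuousFunctionalCalculus ℝ A IsSelfAdjoint] [StarModule ℝ A] {e : ι → A}
    (he : CompleteOrthogonalIdempotents e) (hsa : ∀ i, IsSelfAdjoint (e i)) (c : ι → ℝ)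
    (g : ℝ → ℝ) : cfc g (he.sumSMulAlgHom ℝ c) = he.sumSMulAlgHom ℝ (g ∘ c) := by
  -- On the finite spectrum, `g` agrees with its Lagrange interpolant at the nodes `c i`.
  set p := Lagrange.interpolate (Finset.univ.image c) id g
  have hp : ∀ i, p.eval (c i) = g (c i) := fun i =>
    Lagrange.eval_interpolate_at_node g (Set.injOn_id _)
      (Finset.mem_image_of_mem c (Finset.mem_univ i))
  have hsa' : IsSelfAdjoint (he.sumSMulAlgHom ℝ c) :=
    isSelfAdjoint_sum _ fun i _ => (IsSelfAdjoint.all (c i)).smul (hsa i)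
  calc cfc g (he.sumSMulAlgHom ℝ c) = cfc p.eval (he.sumSMulAlgHom ℝ c) :=
        cfc_congr fun x hx => by
          obtain ⟨i, rfl⟩ := he.spectrum_sumSMulAlgHom_subset c hx
          exact (hp i).symm
    _ = he.sumSMulAlgHom ℝ (g ∘ c) := by
        rw [cfc_polynomial p _ hsa', Polynomial.aeval_algHom_apply, Polynomial.aeval_pi_apply]
        congr 1
        funext i
        simp [hp]

theorem trace_sumSMulAlgHom {n : Type*} [Fintype n] [DecidableEq n] {e : ι → Matrix n n ℂ}
    (he : CompleteOrthogonalIdempotents e) (htr : ∀ i, (e i).trace = 1) (c : ι → ℝ) :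
    (he.sumSMulAlgHom ℝ c).trace = ∑ i, (c i : ℂ) := by
  simp [sumSMulAlgHom_apply, trace_sum, trace_smul, htr]

theorem trace_mul_projNonneg {n : ℕ} {e : ι → Matrix (Fin n) (Fin n) ℂ}
    (he : CompleteOrthogonalIdempotents e) (hsa : ∀ i, IsSelfAdjoint (e i))
    (htr : ∀ i, (e i).trace = 1) (l m : ι → ℝ) (γ : ℝ) :
    (trace (he.sumSMulAlgHom ℝ m *
        projNonneg (γ • he.sumSMulAlgHom ℝ m - he.sumSMulAlgHom ℝ l))).re
      = ∑ i with l i ≤ γ * m i, m i := by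
  rw [← map_smul, ← map_sub, projNonneg, he.cfc_sumSMulAlgHom hsa, ← map_mul,
    he.trace_sumSMulAlgHom htr, Complex.re_sum, Finset.sum_filter]
  refine Finset.sum_congr rfl fun i _ => ?_
  simp [sub_nonneg]

end CompleteOrthogonalIdempotents

theorem Matrix.PosSemidef.nonneg_of_mul_eq_smul {n 𝕜 : Type*} [Fintype n] [RCLike 𝕜]
    {A P : Matrix n n 𝕜} (hA : A.PosSemidef) (hP : IsStarProjection P) (htr : P.trace = 1)
    {c : ℝ} (h : A * P = (c : 𝕜) • P) : 0 ≤ c := by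
  have hPAP : Pᴴ * A * P = (c : 𝕜) • P := by
    rw [← star_eq_conjTranspose, hP.isSelfAdjoint.star_eq, mul_assoc, h, mul_smul_comm,
      hP.isIdempotentElem.eq]
  have := (hA.conjTranspose_mul_mul_same P).trace_nonneg
  rwa [hPAP, trace_smul, htr, smul_eq_mul, mul_one, RCLike.ofReal_nonneg] at this

theorem StieltjesFunction.measure_eq_sum_smul_dirac {ι : Type*} [Fintype ι]
    {F : StieltjesFunction ℝ} {x w : ι → ℝ} (hw : ∀ i, 0 ≤ w i)
    (hF : ∀ γ, F γ = ∑ i with x i ≤ γ, w i) :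
    F.measure = ∑ i, ENNReal.ofReal (w i) • Measure.dirac (x i) := by
  refine Measure.ext_of_Ioc _ _ fun a b hab => ?_
  have hdiff : F b - F a = ∑ i, (Set.Ioc a b).indicator (fun _ => w i) (x i) := by
    rw [hF, hF, Finset.sum_filter, Finset.sum_filter, ← Finset.sum_sub_distrib]
    refine Finset.sum_congr rfl fun i _ => ?_
    by_cases ha : x i ≤ a
    · simp [ha, ha.trans hab.le, ha.not_gt]
    · by_cases hb : x i ≤ b <;> simp [ha, hb, not_le.mp ha]
  rw [StieltjesFunction.measure_Ioc, hdiff, ENNReal.ofReal_sum_of_nonneg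
    (fun i _ => Set.indicator_nonneg (fun _ _ => hw i) _), Measure.finsetSum_apply]
  refine Finset.sum_congr rfl fun i _ => ?_
  by_cases h : x i ∈ Set.Ioc a b <;> simp [h, measurableSet_Ioc]

theorem setIntegral_sum_smul_dirac {α E ι : Type*} [MeasurableSpace α]
    [MeasurableSingletonClass α] [NormedAddCommGroup E] [NormedSpace ℝ E] [CompleteSpace E]
    [Fintype ι] (f : α → E) {s : Set α} {x : ι → α} (hx : ∀ i, x i ∈ s) {w : ι → ℝ}
    (hw : ∀ i, 0 ≤ w i) :
    ∫ y in s, f y ∂(∑ i, ENNReal.ofReal (w i) • Measure.dirac (x i)) = ∑ i, w i • f (x i) := by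
  rw [Measure.restrict_eq_self_of_ae_mem, integral_finsetSum_measure fun i _ =>
    (integrable_dirac (by simp)).smul_measure ENNReal.ofReal_ne_top]
  · simp [integral_smul_measure, integral_dirac, ENNReal.toReal_ofReal (hw _)]
  · rw [ae_iff, Measure.finsetSum_apply]
    simp [Measure.dirac_apply, hx]

theorem stieltjes_integral_eq_classical_fdiv_general {n : ℕ} (ρ σ : Matrix (Fin n) (Fin n) ℂ)
    (hρ : ρ.PosSemidef)
    (ι : Type) [Fintype ι] (l m : ι → ℝ) (Pr : ι → Matrix (Fin n) (Fin n) ℂ)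
    (hproj : ∀ i, (Pr i)ᴴ = Pr i ∧ Pr i * Pr i = Pr i)
    (htr : ∀ i, (Pr i).trace = 1)
    (horth : ∀ i j, i ≠ j → Pr i * Pr j = 0)
    (hsum : ∑ i, Pr i = 1)
    (hρeq : ρ = ∑ i, (l i : ℂ) • Pr i)
    (hσeq : σ = ∑ i, (m i : ℂ) • Pr i)
    (hm : ∀ i, 0 < m i)
    (f : ℝ → ℝ)
    (F : StieltjesFunction ℝ)
    (hF : ∀ γ : ℝ, F γ
      = if 0 ≤ γ then (Matrix.trace (σ * projNonneg (γ • σ - ρ))).re else 0) :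
    ∫ γ in Set.Ici (0:ℝ), f γ ∂F.measure = ∑ i, m i * f (l i / m i) := by
  have he : CompleteOrthogonalIdempotents Pr :=
    ⟨⟨fun i => (hproj i).2, fun i j hij => horth i j hij⟩, hsum⟩
  have hsa : ∀ i, IsSelfAdjoint (Pr i) := fun i => (hproj i).1
  have hρl : ρ = he.sumSMulAlgHom ℝ l := by simp [hρeq, he.sumSMulAlgHom_apply, Complex.coe_smul]
  have hσm : σ = he.sumSMulAlgHom ℝ m := by simp [hσeq, he.sumSMulAlgHom_apply, Complex.coe_smul]
  have hl : ∀ i, 0 ≤ l i := fun i => hρ.nonneg_of_mul_eq_smul ⟨(hproj i).2, hsa i⟩ (htr i) <| by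
    rw [hρl, he.sumSMulAlgHom_apply, he.sum_smul_mul, RCLike.real_smul_eq_coe_smul (K := ℂ)]
  have hx : ∀ i, 0 ≤ l i / m i := fun i => div_nonneg (hl i) (hm i).le
  have hFγ : ∀ γ, F γ = ∑ i with l i / m i ≤ γ, m i := by
    intro γ
    rw [hF, hρl, hσm, he.trace_mul_projNonneg hsa htr]
    split_ifs with hγ
    · simp_rw [div_le_iff₀ (hm _)]
    · refine (Finset.sum_eq_zero fun i hi => ?_).symm
      exact absurd ((hx i).trans (Finset.mem_filter.1 hi).2) hγ
  rw [F.measure_eq_sum_smul_dirac (fun i => (hm i).le) hFγ,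
    setIntegral_sum_smul_dirac f (fun i => Set.mem_Ici.2 (hx i)) (fun i => (hm i).le)]
  simp_rw [smul_eq_mul]

/-- for commuting density matrices `ρ = Σ l i • Pr i`, `σ = Σ m i • Pr i`
with common rank-one spectral projections `Pr i` and `m i > 0`, the
Riemann–Stieltjes integral `∫₀^∞ f(γ) d Tr[σ{ρ ≤ γσ}]` (against the Stieltjes
function that equals `Tr[σ{ρ ≤ γσ}]` for `γ ≥ 0` and `0` for `γ < 0`) equals the
classical f-divergence `Σ m i * f(l i / m i)`, for any continuous `f : [0,∞) → ℝ`. -/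
theorem stieltjes_integral_eq_classical_fdiv {n : ℕ} (ρ σ : Matrix (Fin n) (Fin n) ℂ)
    (hρ : ρ.PosSemidef) (hσ : σ.PosSemidef) (hρ1 : ρ.trace = 1) (hσ1 : σ.trace = 1)
    (ι : Type) [Fintype ι] (l m : ι → ℝ) (Pr : ι → Matrix (Fin n) (Fin n) ℂ)
    (hproj : ∀ i, (Pr i)ᴴ = Pr i ∧ Pr i * Pr i = Pr i)
    (htr : ∀ i, (Pr i).trace = 1)
    (horth : ∀ i j, i ≠ j → Pr i * Pr j = 0)
    (hsum : ∑ i, Pr i = 1)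
    (hρeq : ρ = ∑ i, (l i : ℂ) • Pr i)
    (hσeq : σ = ∑ i, (m i : ℂ) • Pr i)
    (hm : ∀ i, 0 < m i)
    (f : ℝ → ℝ) (hf : ContinuousOn f (Set.Ici 0))
    (F : StieltjesFunction ℝ)
    (hF : ∀ γ : ℝ, F γ
      = if 0 ≤ γ then (Matrix.trace (σ * projNonneg (γ • σ - ρ))).re else 0) :
    ∫ γ in Set.Ici (0:ℝ), f γ ∂F.measure = ∑ i, m i * f (l i / m i) :=
  stieltjes_integral_eq_classical_fdiv_general ρ σ hρ ι l m Pr hproj htr horth hsum hρeq hσeq hm f F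
    hF
end
end

section
/- Let f : [0,∞) → ℝ be convex and differentiable with convex conjugate f*(y) = sup_{x ≥ 0} (xy - f(x)), and let P, Q : [0,∞) → [0,1] be the nondecreasing right-continuous functions P(γ) = Tr[ρ{ρ ≤ γσ}], Q(γ) = Tr[σ{ρ ≤ γσ}] induced by density matrices ρ ≪ σ. Then for every measurable g : [0,∞) → ℝ taking values in the domain of f*, ∫₀^∞ f(γ) dQ(γ) ≥ ∫₀^∞ g(γ) dP(γ) - ∫₀^∞ f*(g(γ)) dQ(γ), with equality for g = f'; i.e., D_f(ρ‖σ) = sup_g { ∫ g dP - ∫ f*∘g dQ }. -/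
/-!
Write `H(γ) = Tr[(γσ - ρ)₊] = Tr[(γσ - ρ){ρ ≤ γσ}]`. For every `0 ≤ E ≤ 1` one has
`Tr[N E] ≤ Tr[N₊]`, which says that `Q(γ) = Tr[σ{ρ ≤ γσ}]` is a subgradient of `H` at `γ`.
Since `Q` is right-continuous, `H` is its primitive, `H(γ) = ∫₀^γ Q`, and therefore
`P(γ) = γ Q(γ) - H(γ) = γ Q(γ) - ∫₀^γ Q`. Integrating by parts (the layer-cake formula) turns
this into the change of measure `dP = γ dQ` on `[0, ∞)`. Hence
`∫ g dP - ∫ f*(g) dQ = ∫ (γ g(γ) - f*(g(γ))) dQ(γ) ≤ ∫ f dQ` by Young's inequality, with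
pointwise equality for `g = f'` because the tangent line of `f` at `γ` lies below `f`.
Both measures live on `[0, T]` where `Tσ ≥ ρ`, which makes `f` and `f'` integrable.
-/

open MeasureTheory Matrix
open scoped ComplexOrder
noncomputable section

/-- The convex conjugate `f*(y) = sup_{x ≥ 0} (xy - f x)`. -/
def fenchelConj (f : ℝ → ℝ) (y : ℝ) : ℝ :=
  ⨆ x : {x : ℝ // 0 ≤ x}, ((x : ℝ) * y - f x)

namespace Matrix

variable {n : ℕ}

open scoped MatrixOrder

theorem PosSemidef.re_trace_mul_nonneg {ι : Type*} [Fintype ι] [DecidableEq ι]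
    {A B : Matrix ι ι ℂ} (hA : A.PosSemidef) (hB : B.PosSemidef) : 0 ≤ (A * B).trace.re := by
  have hsqrt : (CFC.sqrt A)ᴴ = CFC.sqrt A := (CFC.sqrt_nonneg A).posSemidef.isHermitian.eq
  have htrace : (A * B).trace = (CFC.sqrt A * B * (CFC.sqrt A)ᴴ).trace := by
    rw [hsqrt, trace_mul_cycle, Matrix.mul_assoc, ← Matrix.mul_assoc,
      CFC.sqrt_mul_sqrt_self A hA.nonneg]
  rw [htrace]
  exact (Complex.nonneg_iff.mp (hB.mul_mul_conjTranspose_same _).trace_nonneg).1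

theorem posSemidef_cfc (M : Matrix (Fin n) (Fin n) ℂ) {f : ℝ → ℝ}
    (hf : ∀ x ∈ spectrum ℝ M, 0 ≤ f x) : (cfc f M).PosSemidef :=
  nonneg_iff_posSemidef.mp (cfc_nonneg hf)

variable {N : Matrix (Fin n) (Fin n) ℂ}

theorem projNonneg_posSemidef : (projNonneg N).PosSemidef :=
  posSemidef_cfc N fun x _ => by split_ifs <;> norm_num

theorem IsHermitian.one_sub_projNonneg_posSemidef (hN : N.IsHermitian) :
    (1 - projNonneg N).PosSemidef := by
  have h : 1 - projNonneg N = cfc (fun x : ℝ => 1 - if 0 ≤ x then (1 : ℝ) else 0) N := by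
    rw [projNonneg, cfc_sub _ _ N (N.finite_real_spectrum.continuousOn _)
      (N.finite_real_spectrum.continuousOn _), cfc_const_one ℝ N]
  rw [h]
  exact posSemidef_cfc N fun x _ => by split_ifs <;> norm_num

theorem IsHermitian.mul_projNonneg (hN : N.IsHermitian) :
    N * projNonneg N = cfc (fun x : ℝ => max x 0) N := by
  nth_rewrite 1 [← cfc_id' ℝ N]
  rw [projNonneg, ← cfc_mul _ _ N (N.finite_real_spectrum.continuousOn _)
    (N.finite_real_spectrum.continuousOn _)]
  refine cfc_congr fun x _ => ?_
  split_ifs with hx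
  · simp [hx]
  · simp [max_eq_right (not_le.mp hx).le]

theorem projNonneg_eq_one (hN : N.PosSemidef) : projNonneg N = 1 := by
  rw [projNonneg, ← cfc_const_one ℝ N hN.isHermitian.isSelfAdjoint]
  exact cfc_congr fun x hx => if_pos (spectrum_nonneg_of_nonneg hN.nonneg hx)

theorem mul_projNonneg_eq_zero (hN : (-N).PosSemidef) : N * projNonneg N = 0 := by
  have hN' : N.IsHermitian := by simpa using hN.isHermitian.neg
  rw [hN'.mul_projNonneg, ← cfc_zero ℝ N]
  refine cfc_congr fun x hx => max_eq_right ?_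
  have : -x ∈ spectrum ℝ (-N) := by rw [← spectrum.neg_eq]; simpa using hx
  linarith [spectrum_nonneg_of_nonneg hN.nonneg this]

theorem IsHermitian.re_trace_mul_le_re_trace_mul_projNonneg (hN : N.IsHermitian)
    {E : Matrix (Fin n) (Fin n) ℂ} (hE : E.PosSemidef) (hE1 : (1 - E).PosSemidef) :
    (N * E).trace.re ≤ (N * projNonneg N).trace.re := by
  set Npos := cfc (fun x : ℝ => max x 0) N
  have hNpos : Npos.PosSemidef := posSemidef_cfc N fun x _ => le_max_right x 0
  have hNneg : (Npos - N).PosSemidef := by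
    have : Npos - N = cfc (fun x : ℝ => max x 0 - x) N := by
      rw [cfc_sub _ _ N (N.finite_real_spectrum.continuousOn _)
        (N.finite_real_spectrum.continuousOn _), cfc_id' ℝ N]
    rw [this]
    exact posSemidef_cfc N fun x _ => sub_nonneg.mpr (le_max_left x 0)
  have hsplit : Npos - N * E = Npos * (1 - E) + (Npos - N) * E := by noncomm_ring
  have := congrArg (fun M => M.trace.re) hsplit
  simp only [trace_sub, trace_add, Complex.sub_re, Complex.add_re] at this
  rw [hN.mul_projNonneg]
  linarith [hNpos.re_trace_mul_nonneg hE1, hNneg.re_trace_mul_nonneg hE]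

end Matrix

section HockeyStick

variable {n : ℕ} (ρ σ : Matrix (Fin n) (Fin n) ℂ)

def hockeyStick (γ : ℝ) : ℝ :=
  ((γ • σ - ρ) * projNonneg (γ • σ - ρ)).trace.re

variable {ρ σ}

theorem hockeyStick_add_mul_sub_le (hρ : ρ.IsHermitian) (hσ : σ.IsHermitian) (γ δ : ℝ) :
    hockeyStick ρ σ γ + (σ * projNonneg (γ • σ - ρ)).trace.re * (δ - γ) ≤ hockeyStick ρ σ δ := by
  have herm : ∀ t : ℝ, (t • σ - ρ).IsHermitian := fun t =>
    (IsSelfAdjoint.smul (star_trivial t) hσ.isSelfAdjoint).sub hρ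
  have hshift : δ • σ - ρ = (γ • σ - ρ) + (δ - γ) • σ := by rw [sub_smul]; abel
  have hle := (herm δ).re_trace_mul_le_re_trace_mul_projNonneg (E := projNonneg (γ • σ - ρ))
    Matrix.projNonneg_posSemidef (herm γ).one_sub_projNonneg_posSemidef
  rw [hshift, add_mul, Matrix.trace_add, smul_mul_assoc, Matrix.trace_smul, Complex.add_re,
    Complex.real_smul, Complex.re_ofReal_mul, ← hshift] at hle
  unfold hockeyStick
  linarith

theorem hockeyStick_zero (hρ : ρ.PosSemidef) : hockeyStick ρ σ 0 = 0 := by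
  rw [hockeyStick, Matrix.mul_projNonneg_eq_zero (by simpa using hρ)]
  simp

theorem re_trace_mul_projNonneg_eq (γ : ℝ) :
    (ρ * projNonneg (γ • σ - ρ)).trace.re
      = γ * (σ * projNonneg (γ • σ - ρ)).trace.re - hockeyStick ρ σ γ := by
  rw [hockeyStick, sub_mul, Matrix.trace_sub, smul_mul_assoc, Matrix.trace_smul, Complex.sub_re,
    Complex.real_smul, Complex.re_ofReal_mul]
  ring

end HockeyStick

open MeasureTheory Set Filter Topology
open scoped ENNReal

namespace StieltjesFunction

variable (Q : StieltjesFunction ℝ)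

theorem integral_eq_sub_of_add_mul_sub_le {F : ℝ → ℝ} {a b : ℝ} (hab : a ≤ b)
    (hF : ∀ x ∈ Icc a b, ∀ y ∈ Icc a b, F x + Q x * (y - x) ≤ F y) :
    ∫ x in a..b, Q x = F b - F a := by
  set C := max |Q a| |Q b|
  have hQ : ∀ x ∈ Icc a b, |Q x| ≤ C := fun x hx =>
    abs_le_max_abs_abs (Q.mono hx.1) (Q.mono hx.2)
  have hlip : LipschitzOnWith (Real.toNNReal C) F (Icc a b) := by
    refine LipschitzOnWith.of_dist_le_mul fun x hx y hy => ?_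
    rw [Real.dist_eq, Real.dist_eq, Real.coe_toNNReal _ ((abs_nonneg _).trans (hQ a ⟨le_rfl, hab⟩))]
    have hx' : |Q x * (x - y)| ≤ C * |x - y| := by rw [abs_mul]; gcongr; exact hQ x hx
    have hy' : |Q y * (x - y)| ≤ C * |x - y| := by rw [abs_mul]; gcongr; exact hQ y hy
    rw [abs_le] at hx' hy' ⊢
    constructor <;> linarith [hF x hx y hy, hF y hy x hx]
  refine intervalIntegral.integral_eq_sub_of_hasDeriv_right_of_le hab hlip.continuousOn
    (fun x hx => ?_) Q.mono.intervalIntegrable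
  rw [hasDerivWithinAt_iff_tendsto_slope, sdiff_singleton_eq_self (by simp : x ∉ Ioi x)]
  have hnear : ∀ᶠ δ in 𝓝[>] x, δ ∈ Ioc x b := Ioc_mem_nhdsGT hx.2
  replace hx : x ∈ Icc a b := Ioo_subset_Icc_self hx
  refine tendsto_of_tendsto_of_tendsto_of_le_of_le' tendsto_const_nhds
    ((Q.right_continuous x).mono Ioi_subset_Ici_self) ?_ ?_ <;>
    filter_upwards [hnear] with δ hδ
  · have hδ' : δ ∈ Icc a b := ⟨hx.1.trans hδ.1.le, hδ.2⟩
    rw [slope_def_field, le_div_iff₀ (sub_pos.2 hδ.1)]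
    linarith [hF x hx δ hδ']
  · have hδ' : δ ∈ Icc a b := ⟨hx.1.trans hδ.1.le, hδ.2⟩
    rw [slope_def_field, div_le_iff₀ (sub_pos.2 hδ.1)]
    linarith [hF δ hδ' x hx]

theorem setLIntegral_Icc_zero_ofReal {b : ℝ} (hb : 0 ≤ b) :
    ∫⁻ γ in Icc 0 b, ENNReal.ofReal γ ∂Q.measure
      = ENNReal.ofReal (b * Q b - ∫ t in 0..b, Q t) := by
  have hlayer := lintegral_eq_lintegral_meas_lt (Q.measure.restrict (Icc 0 b)) (f := id)
    ((ae_restrict_iff' measurableSet_Icc).2 (Eventually.of_forall fun γ hγ => hγ.1))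
    aemeasurable_id
  have htail : EqOn (fun t => Q.measure.restrict (Icc 0 b) {γ | t < id γ})
      (fun t => ENNReal.ofReal (Q b - Q t)) (Ioi 0) := by
    intro t ht
    show Q.measure.restrict (Icc 0 b) (Ioi t) = ENNReal.ofReal (Q b - Q t)
    rw [Measure.restrict_apply _root_.measurableSet_Ioi, ← Q.measure_Ioc]
    congr 1
    ext γ
    simp only [mem_inter_iff, mem_Ioi, mem_Icc, mem_Ioc]
    exact ⟨fun h => ⟨h.1, h.2.2⟩, fun h => ⟨h.1, (le_of_lt ht).trans h.1.le, h.2⟩⟩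
  have hbeyond : EqOn (fun t => ENNReal.ofReal (Q b - Q t)) 0 (Ioi b) := fun t ht =>
    ENNReal.ofReal_eq_zero.2 (sub_nonpos.2 (Q.mono (le_of_lt ht)))
  have hnonneg : 0 ≤ᵐ[volume.restrict (Ioc 0 b)] fun t => Q b - Q t :=
    (ae_restrict_iff' measurableSet_Ioc).2
      (Eventually.of_forall fun t ht => sub_nonneg.2 (Q.mono ht.2))
  have hint : IntegrableOn (fun t => Q b - Q t) (Ioc 0 b) := by
    rw [← intervalIntegrable_iff_integrableOn_Ioc_of_le hb]
    exact intervalIntegrable_const.sub Q.mono.intervalIntegrable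
  rw [show ∫⁻ γ in Icc 0 b, ENNReal.ofReal γ ∂Q.measure = _ from hlayer,
    setLIntegral_congr_fun _root_.measurableSet_Ioi htail, ← Ioc_union_Ioi_eq_Ioi hb,
    lintegral_union _root_.measurableSet_Ioi (Ioc_disjoint_Ioi le_rfl),
    setLIntegral_congr_fun _root_.measurableSet_Ioi hbeyond, Pi.zero_def, lintegral_zero, add_zero,
    ← ofReal_integral_eq_lintegral_ofReal hint hnonneg, ← intervalIntegral.integral_of_le hb,
    intervalIntegral.integral_sub intervalIntegrable_const Q.mono.intervalIntegrable,
    intervalIntegral.integral_const, smul_eq_mul, sub_zero]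

theorem restrict_Ici_eq_withDensity (P : StieltjesFunction ℝ) [IsFiniteMeasure P.measure]
    (hneg : ∀ γ < 0, P γ = 0) (hpos : ∀ γ, 0 ≤ γ → P γ = γ * Q γ - ∫ t in 0..γ, Q t) :
    P.measure.restrict (Ici 0)
      = (Q.measure.restrict (Ici 0)).withDensity fun γ => ENNReal.ofReal γ := by
  refine Measure.ext_of_Iic _ _ fun t => ?_
  rw [Measure.restrict_apply measurableSet_Iic, withDensity_apply _ measurableSet_Iic,
    Measure.restrict_restrict measurableSet_Iic, Iic_inter_Ici]
  rcases lt_or_ge t 0 with ht | ht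
  · simp [Icc_eq_empty_of_lt ht]
  have hleft : Function.leftLim P 0 = 0 :=
    leftLim_eq_of_tendsto (tendsto_const_nhds.congr'
      (eventually_nhdsWithin_of_forall fun γ hγ => (hneg γ hγ).symm))
  rw [P.measure_Icc, Q.setLIntegral_Icc_zero_ofReal ht, hleft, sub_zero, hpos t ht]

theorem measure_Ioi_eq_zero {T c : ℝ} (hT : ∀ γ, T ≤ γ → Q γ = c) : Q.measure (Ioi T) = 0 := by
  have hlim : Tendsto Q atTop (𝓝 c) :=
    tendsto_const_nhds.congr' (eventually_atTop.2 ⟨T, fun γ hγ => (hT γ hγ).symm⟩)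
  rw [Q.measure_Ioi hlim, hT T le_rfl, sub_self, ENNReal.ofReal_zero]

end StieltjesFunction

theorem MeasureTheory.IntegrableOn.Ici_of_Icc {μ : Measure ℝ} {f : ℝ → ℝ} {a b : ℝ}
    (hf : IntegrableOn f (Icc a b) μ) (hb : μ (Ioi b) = 0) : IntegrableOn f (Ici a) μ :=
  (hf.union (IntegrableOn.of_measure_zero hb)).mono_set fun x hx =>
    (le_or_gt x b).imp (fun h => ⟨hx, h⟩) id

theorem re_trace_mul_projNonneg_eq_mul_sub_integral {n : ℕ} {ρ σ : Matrix (Fin n) (Fin n) ℂ}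
    (hρ : ρ.PosSemidef) (hσ : σ.IsHermitian) (Q : StieltjesFunction ℝ)
    (hQ : ∀ γ, 0 ≤ γ → Q γ = (σ * projNonneg (γ • σ - ρ)).trace.re) {γ : ℝ} (hγ : 0 ≤ γ) :
    (ρ * projNonneg (γ • σ - ρ)).trace.re = γ * Q γ - ∫ t in 0..γ, Q t := by
  have hH : ∫ t in 0..γ, Q t = hockeyStick ρ σ γ - hockeyStick ρ σ 0 :=
    Q.integral_eq_sub_of_add_mul_sub_le hγ fun x hx y _ => by
      rw [hQ x hx.1]
      exact hockeyStick_add_mul_sub_le hρ.isHermitian hσ x y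
  rw [hH, hockeyStick_zero hρ, sub_zero, hQ γ hγ, re_trace_mul_projNonneg_eq]

theorem ConvexOn.add_derivWithin_mul_sub_le {S : Set ℝ} {f : ℝ → ℝ} (hf : ConvexOn ℝ S f)
    {x y : ℝ} (hx : x ∈ S) (hy : y ∈ S) (hfx : DifferentiableWithinAt ℝ f S x) :
    f x + derivWithin f S x * (y - x) ≤ f y := by
  rcases lt_trichotomy y x with hyx | rfl | hxy
  · have h := hf.slope_le_derivWithin hy hx hyx hfx
    rw [slope_def_field, div_le_iff₀ (sub_pos.2 hyx)] at h
    linarith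
  · simp
  · have h := hf.derivWithin_le_slope hx hy hxy hfx
    rw [slope_def_field, le_div_iff₀ (sub_pos.2 hxy)] at h
    linarith

section FenchelConj

variable {f : ℝ → ℝ}

theorem mul_sub_le_fenchelConj {x y : ℝ} (hx : 0 ≤ x)
    (hbdd : BddAbove (range fun z : {z : ℝ // 0 ≤ z} => (z : ℝ) * y - f z)) :
    x * y - f x ≤ fenchelConj f y :=
  le_ciSup hbdd (⟨x, hx⟩ : {z : ℝ // 0 ≤ z})

theorem fenchelConj_derivWithin (hf : ConvexOn ℝ (Ici 0) f) {x : ℝ} (hx : 0 ≤ x)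
    (hfx : DifferentiableWithinAt ℝ f (Ici 0) x) :
    fenchelConj f (derivWithin f (Ici 0) x) = x * derivWithin f (Ici 0) x - f x := by
  have hle : ∀ z : {z : ℝ // 0 ≤ z},
      (z : ℝ) * derivWithin f (Ici 0) x - f z ≤ x * derivWithin f (Ici 0) x - f x := fun z => by
    linarith [hf.add_derivWithin_mul_sub_le hx z.2 hfx]
  exact le_antisymm (ciSup_le hle)
    (mul_sub_le_fenchelConj hx ⟨_, forall_mem_range.2 hle⟩)

end FenchelConj

section ChangeOfMeasure

variable {μ ν : Measure ℝ}
  (hμν : μ.restrict (Ici 0) = (ν.restrict (Ici 0)).withDensity fun γ => ENNReal.ofReal γ)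
include hμν

theorem setIntegral_Ici_eq_setIntegral_mul (h : ℝ → ℝ) :
    ∫ γ in Ici 0, h γ ∂μ = ∫ γ in Ici 0, γ * h γ ∂ν := by
  rw [hμν, show (fun γ : ℝ => ENNReal.ofReal γ) = fun γ => (Real.toNNReal γ : ℝ≥0∞) from rfl,
    integral_withDensity_eq_integral_smul measurable_real_toNNReal]
  refine setIntegral_congr_fun measurableSet_Ici fun γ hγ => ?_
  simp [NNReal.smul_def, Real.coe_toNNReal γ hγ]

theorem integrableOn_Ici_iff_integrableOn_mul (h : ℝ → ℝ) :
    IntegrableOn h (Ici 0) μ ↔ IntegrableOn (fun γ => γ * h γ) (Ici 0) ν := by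
  rw [IntegrableOn, hμν,
    show (fun γ : ℝ => ENNReal.ofReal γ) = fun γ => (Real.toNNReal γ : ℝ≥0∞) from rfl,
    integrable_withDensity_iff_integrable_smul measurable_real_toNNReal]
  refine integrableOn_congr_fun (fun γ hγ => ?_) measurableSet_Ici
  simp [NNReal.smul_def, Real.coe_toNNReal γ hγ]

variable {f : ℝ → ℝ}

theorem integral_sub_integral_fenchelConj_le {g : ℝ → ℝ}
    (hbdd : ∀ γ, 0 ≤ γ → BddAbove (range fun x : {x : ℝ // 0 ≤ x} => (x : ℝ) * g γ - f x))
    (hf : IntegrableOn f (Ici 0) ν) (hg : IntegrableOn g (Ici 0) μ)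
    (hfg : IntegrableOn (fun γ => fenchelConj f (g γ)) (Ici 0) ν) :
    ∫ γ in Ici 0, g γ ∂μ - ∫ γ in Ici 0, fenchelConj f (g γ) ∂ν ≤ ∫ γ in Ici 0, f γ ∂ν := by
  have hg' := (integrableOn_Ici_iff_integrableOn_mul hμν g).1 hg
  rw [setIntegral_Ici_eq_setIntegral_mul hμν, ← integral_sub hg' hfg]
  refine setIntegral_mono_on (hg'.sub hfg) hf measurableSet_Ici fun γ hγ => ?_
  linarith [mul_sub_le_fenchelConj hγ (hbdd γ hγ)]

theorem integral_eq_integral_derivWithin_sub_integral_fenchelConj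
    (hconv : ConvexOn ℝ (Ici 0) f) (hdiff : DifferentiableOn ℝ f (Ici 0))
    (hf : IntegrableOn f (Ici 0) ν) (hf' : IntegrableOn (derivWithin f (Ici 0)) (Ici 0) μ) :
    ∫ γ in Ici 0, f γ ∂ν = ∫ γ in Ici 0, derivWithin f (Ici 0) γ ∂μ
      - ∫ γ in Ici 0, fenchelConj f (derivWithin f (Ici 0) γ) ∂ν := by
  have hf'' := (integrableOn_Ici_iff_integrableOn_mul hμν _).1 hf'
  rw [setIntegral_Ici_eq_setIntegral_mul hμν,
    setIntegral_congr_fun measurableSet_Ici fun γ hγ =>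
      fenchelConj_derivWithin hconv hγ (hdiff γ hγ),
    integral_sub hf'' hf]
  ring

end ChangeOfMeasure

theorem quantum_fdivergence_duality_general {n : ℕ} (ρ σ : Matrix (Fin n) (Fin n) ℂ)
    (hρ : ρ.PosSemidef) (hσ : σ.PosSemidef)
    (hfin : ∃ t : ℝ, (t • σ - ρ).PosSemidef)
    (f : ℝ → ℝ) (hconv : ConvexOn ℝ (Set.Ici 0) f)
    (hdiff : DifferentiableOn ℝ f (Set.Ici 0))
    (P Q : StieltjesFunction ℝ)
    (hP : ∀ γ : ℝ, P γ
      = if 0 ≤ γ then (Matrix.trace (ρ * projNonneg (γ • σ - ρ))).re else 0)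
    (hQ : ∀ γ : ℝ, Q γ
      = if 0 ≤ γ then (Matrix.trace (σ * projNonneg (γ • σ - ρ))).re else 0) :
    (∀ g : ℝ → ℝ, Measurable g →
      (∀ γ, BddAbove (Set.range fun x : {x : ℝ // 0 ≤ x} => (x : ℝ) * g γ - f x)) →
      MeasureTheory.Integrable g (P.measure.restrict (Set.Ici 0)) →
      MeasureTheory.Integrable (fun γ => fenchelConj f (g γ))
        (Q.measure.restrict (Set.Ici 0)) →
      (∫ γ in Set.Ici (0:ℝ), g γ ∂P.measure)
          - ∫ γ in Set.Ici (0:ℝ), fenchelConj f (g γ) ∂Q.measure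
        ≤ ∫ γ in Set.Ici (0:ℝ), f γ ∂Q.measure) ∧
    (∫ γ in Set.Ici (0:ℝ), f γ ∂Q.measure
      = (∫ γ in Set.Ici (0:ℝ), derivWithin f (Set.Ici 0) γ ∂P.measure)
        - ∫ γ in Set.Ici (0:ℝ), fenchelConj f (derivWithin f (Set.Ici 0) γ) ∂Q.measure) := by
  obtain ⟨T, hT, hdom⟩ : ∃ T : ℝ, 0 ≤ T ∧ ∀ γ : ℝ, T ≤ γ → (γ • σ - ρ).PosSemidef := by
    obtain ⟨t, ht⟩ := hfin
    refine ⟨max t 0, le_max_right t 0, fun γ hγ => ?_⟩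
    rw [show γ • σ - ρ = (t • σ - ρ) + (γ - t) • σ by rw [sub_smul]; abel]
    exact ht.add (hσ.smul (sub_nonneg.2 ((le_max_left t 0).trans hγ)))
  have hPT : ∀ γ : ℝ, T ≤ γ → P γ = ρ.trace.re := fun γ hγ => by
    rw [hP, if_pos (hT.trans hγ), projNonneg_eq_one (hdom γ hγ), mul_one]
  have hQT : ∀ γ : ℝ, T ≤ γ → Q γ = σ.trace.re := fun γ hγ => by
    rw [hQ, if_pos (hT.trans hγ), projNonneg_eq_one (hdom γ hγ), mul_one]
  have hPneg : ∀ γ : ℝ, γ < 0 → P γ = 0 := fun γ hγ => by rw [hP, if_neg hγ.not_ge]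
  have : IsFiniteMeasure P.measure :=
    P.isFiniteMeasure (tendsto_const_nhds.congr' (eventually_atBot.2 ⟨-1, fun γ hγ =>
      (hPneg γ (by linarith)).symm⟩))
      (tendsto_const_nhds.congr' (eventually_atTop.2 ⟨T, fun γ hγ => (hPT γ hγ).symm⟩))
  have hPQ := Q.restrict_Ici_eq_withDensity P hPneg fun γ hγ => by
    rw [hP, if_pos hγ]
    exact re_trace_mul_projNonneg_eq_mul_sub_integral hρ hσ.isHermitian Q
      (fun γ hγ => by rw [hQ, if_pos hγ]) hγ
  have hf : IntegrableOn f (Ici 0) Q.measure :=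
    ((hdiff.continuousOn.mono Icc_subset_Ici_self).integrableOn_compact isCompact_Icc).Ici_of_Icc
      (Q.measure_Ioi_eq_zero hQT)
  have hf' : IntegrableOn (derivWithin f (Ici 0)) (Ici 0) P.measure :=
    (((hconv.monotoneOn_derivWithin hdiff).mono Icc_subset_Ici_self).integrableOn_isCompact
      isCompact_Icc).Ici_of_Icc (b := T) (P.measure_Ioi_eq_zero hPT)
  exact ⟨fun g _ hbdd hg hfg =>
      integral_sub_integral_fenchelConj_le hPQ (fun γ _ => hbdd γ) hf hg hfg,
    integral_eq_integral_derivWithin_sub_integral_fenchelConj hPQ hconv hdiff hf hf'⟩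

/-- quantum f-divergence duality: with `P(γ) = Tr[ρ{ρ ≤ γσ}]`,
`Q(γ) = Tr[σ{ρ ≤ γσ}]` realized as Stieltjes functions (set to `0` for `γ < 0`),
for every measurable `g` with values in the domain of `f*`,
`∫ f dQ ≥ ∫ g dP - ∫ f*∘g dQ`, with equality for `g = f'`. -/
theorem quantum_fdivergence_duality {n : ℕ} (ρ σ : Matrix (Fin n) (Fin n) ℂ)
    (hρ : ρ.PosSemidef) (hσ : σ.PosSemidef) (hρ1 : ρ.trace = 1) (hσ1 : σ.trace = 1)
    (hsupp : ∀ x : Fin n → ℂ, σ *ᵥ x = 0 → ρ *ᵥ x = 0)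
    (hfin : ∃ t : ℝ, (t • σ - ρ).PosSemidef)
    (f : ℝ → ℝ) (hconv : ConvexOn ℝ (Set.Ici 0) f)
    (hdiff : DifferentiableOn ℝ f (Set.Ici 0))
    (P Q : StieltjesFunction ℝ)
    (hP : ∀ γ : ℝ, P γ
      = if 0 ≤ γ then (Matrix.trace (ρ * projNonneg (γ • σ - ρ))).re else 0)
    (hQ : ∀ γ : ℝ, Q γ
      = if 0 ≤ γ then (Matrix.trace (σ * projNonneg (γ • σ - ρ))).re else 0) :
    (∀ g : ℝ → ℝ, Measurable g →
      (∀ γ, BddAbove (Set.range fun x : {x : ℝ // 0 ≤ x} => (x : ℝ) * g γ - f x)) →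
      MeasureTheory.Integrable g (P.measure.restrict (Set.Ici 0)) →
      MeasureTheory.Integrable (fun γ => fenchelConj f (g γ))
        (Q.measure.restrict (Set.Ici 0)) →
      (∫ γ in Set.Ici (0:ℝ), g γ ∂P.measure)
          - ∫ γ in Set.Ici (0:ℝ), fenchelConj f (g γ) ∂Q.measure
        ≤ ∫ γ in Set.Ici (0:ℝ), f γ ∂Q.measure) ∧
    (∫ γ in Set.Ici (0:ℝ), f γ ∂Q.measure
      = (∫ γ in Set.Ici (0:ℝ), derivWithin f (Set.Ici 0) γ ∂P.measure)
        - ∫ γ in Set.Ici (0:ℝ), fenchelConj f (derivWithin f (Set.Ici 0) γ) ∂Q.measure) :=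
  quantum_fdivergence_duality_general ρ σ hρ hσ hfin f hconv hdiff P Q hP hQ
end
end
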